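/- arXiv:2407.05043 — 5 statements merged into one kernel-verified Lean document; each statement's English description precedes it below -/
import Mathlib

section
/- Let (K,σ) ⊆ (M,σ) ⊆ (L,σ) be a tower of difference field extensions. If K ⊆ M and M ⊆ L are both σ-separable, then K ⊆ L is σ-separable. Moreover, if K ⊆ L is σ-separable, then K ⊆ M is σ-separable. -/
/-- A and B are linearly disjoint over C (inside the ambient field Ω). -/
def LinDisj {Ω : Type*} [Field Ω] (C A B : Set Ω) : Prop :=
  ∀ (n : ℕ) (a : Fin n → Ω), (∀ i, a i ∈ A) →
    (∀ c : Fin n → Ω, (∀ i, c i ∈ C) → (∑ i, c i * a i) = 0 → ∀ i, c i = 0) →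
    (∀ c : Fin n → Ω, (∀ i, c i ∈ B) → (∑ i, c i * a i) = 0 → ∀ i, c i = 0)

def SigmaSeparable {Ω : Type*} [Field Ω] (σ : Ω →+* Ω) (K M : Subfield Ω) : Prop :=
  LinDisj (σ '' (K : Set Ω)) (K : Set Ω) (σ '' (M : Set Ω))

theorem LinDisj.trans {Ω : Type*} [Field Ω] {C D A E B : Set Ω} (h₁ : LinDisj C A D)
    (h₂ : LinDisj D E B) (hAE : A ⊆ E) : LinDisj C A B :=
  fun n a ha hC => h₂ n a (fun i => hAE (ha i)) (h₁ n a ha hC)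

theorem LinDisj.mono_right {Ω : Type*} [Field Ω] {C A B B' : Set Ω} (h : LinDisj C A B)
    (hB : B' ⊆ B) : LinDisj C A B' :=
  fun n a ha hC c hc => h n a ha hC c fun i => hB (hc i)

theorem sigmaSeparable_tower_general {Ω : Type*} [Field Ω] (σ : Ω →+* Ω)
    (K M : Subfield Ω) (hKM : K ≤ M) :
    ((SigmaSeparable σ K M ∧ SigmaSeparable σ M ⊤) → SigmaSeparable σ K ⊤) ∧
    (SigmaSeparable σ K ⊤ → SigmaSeparable σ K M) :=
  ⟨fun ⟨hK, hM⟩ => LinDisj.trans hK hM hKM,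
    fun h => LinDisj.mono_right h (Set.image_mono le_top)⟩

theorem sigmaSeparable_tower {Ω : Type*} [Field Ω] (σ : Ω →+* Ω)
    (K M : Subfield Ω) (hKM : K ≤ M) (hMT : M ≤ (⊤ : Subfield Ω))
    (hK : ∀ x ∈ K, σ x ∈ K) (hM : ∀ x ∈ M, σ x ∈ M) :
    ((SigmaSeparable σ K M ∧ SigmaSeparable σ M ⊤) → SigmaSeparable σ K ⊤) ∧
    (SigmaSeparable σ K ⊤ → SigmaSeparable σ K M) :=
  sigmaSeparable_tower_general σ K M hKM
end

section
/- Let (K,v,σ) be a valued difference field. Define the FE-closure of K as K_FE := K^alg ∩ K_inv (the relative algebraic closure of K in its inversive closure, with the induced valuation and endomorphism). Then σ(K_FE) is relatively algebraically closed in K_FE, and for any valued difference field extension (L,v,σ) of (K,v,σ) in which σ(L) is relatively algebraically closed in L, there is a unique valued difference field embedding K_FE → L over K. -/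
/-!
Every `z ∈ K_inv` has `σᵐ z ∈ K` for all large `m`, so an embedding over `K` commuting with the
endomorphisms must send `z` to `τ⁻ᵐ (f (σᵐ z))`; this gives uniqueness. If `z` is algebraic over
`K`, then `f (σᵐ z)` is algebraic over `τᵐ(L)`, which is relatively algebraically closed in `L` by
iterating FE, so `τ⁻ᵐ (f (σᵐ z))` exists. It does not depend on `m` since `τ` is injective, and
the resulting map respects sums, products, valuations and the endomorphisms.
Part (a) uses that `σ` is onto `K_inv`: if `σ y` is algebraic over `σ(K_FE)`, then `y` is algebraic
over `K_FE`, hence over `K`, so `y ∈ K_FE`.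
-/

open Filter Function

namespace Subfield

variable {Ω Ω' : Type*} [Field Ω] [Field Ω']

theorem isAlgebraic_of_le {F F' : Subfield Ω} (h : F ≤ F') {x : Ω} (hx : IsAlgebraic F x) :
    IsAlgebraic F' x :=
  hx.ringHom_of_comp_eq (inclusion h) (RingHom.id Ω) (inclusion h).injective rfl

theorem isAlgebraic_map_iff (φ : Ω →+* Ω') (F : Subfield Ω) (x : Ω) :
    IsAlgebraic (F.map φ) (φ x) ↔ IsAlgebraic F x := by
  let φF : F →+* F.map φ := φ.restrict F (F.map φ) fun y hy => ⟨y, hy, rfl⟩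
  have hφF : Surjective φF := by
    rintro ⟨_, y, hy, rfl⟩
    exact ⟨⟨y, hy⟩, rfl⟩
  exact ⟨fun h => h.of_ringHom_of_comp_eq φF φ hφF φ.injective rfl,
    fun h => h.ringHom_of_comp_eq φF φ φF.injective rfl⟩

theorem isAlgebraic_trans {F E : Subfield Ω} (hFE : F ≤ E) (hE : ∀ c ∈ E, IsAlgebraic F c)
    {x : Ω} (hx : IsAlgebraic E x) : IsAlgebraic F x := by
  let _ : Algebra F E := (inclusion hFE).toAlgebra
  have : IsScalarTower F E Ω := .of_algebraMap_eq fun _ => rfl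
  have : Algebra.IsAlgebraic F E :=
    ⟨fun c => (isAlgebraic_algebraMap_iff (algebraMap E Ω).injective).1 (hE c c.2)⟩
  exact hx.restrictScalars F

theorem isAlgebraic_apply {σ : Ω →+* Ω} {K : Subfield Ω} (hσK : ∀ x ∈ K, σ x ∈ K) {x : Ω}
    (hx : IsAlgebraic K x) : IsAlgebraic K (σ x) :=
  isAlgebraic_of_le (map_le_iff_le_comap.2 hσK) ((isAlgebraic_map_iff σ K x).2 hx)

theorem mem_map_of_isAlgebraic {σ : Ω →+* Ω} (hσ : Surjective σ) {K E : Subfield Ω}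
    (hE : ∀ x, x ∈ E ↔ IsAlgebraic K x) {x : Ω} (hx : IsAlgebraic (E.map σ) x) :
    x ∈ E.map σ := by
  obtain ⟨y, rfl⟩ := hσ x
  have hKE : K ≤ E := fun c hc => (hE c).2 (isAlgebraic_algebraMap (⟨c, hc⟩ : K))
  exact ⟨y, (hE y).2 <|
    isAlgebraic_trans hKE (fun c hc => (hE c).1 hc) ((isAlgebraic_map_iff σ E y).1 hx), rfl⟩

end Subfield

namespace RingHom

variable {L : Type*} [Field L]

theorem mem_fieldRange_pow_of_isAlgebraic {τ : L →+* L}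
    (hτ : ∀ y, IsAlgebraic τ.fieldRange y → y ∈ τ.fieldRange) (n : ℕ) {y : L}
    (hy : IsAlgebraic (τ ^ n).fieldRange y) : y ∈ (τ ^ n).fieldRange := by
  induction n generalizing y with
  | zero => exact ⟨y, rfl⟩
  | succ n ih =>
    have hrange : (τ ^ (n + 1)).fieldRange = (τ ^ n).fieldRange.map τ := by
      rw [map_fieldRange, pow_succ']; rfl
    rw [hrange] at hy ⊢
    have hle : (τ ^ n).fieldRange.map τ ≤ τ.fieldRange := fun _ ⟨u, _, hu⟩ => ⟨u, hu⟩
    obtain ⟨u, rfl⟩ := hτ y (Subfield.isAlgebraic_of_le hle hy)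
    exact ⟨u, ih ((Subfield.isAlgebraic_map_iff τ _ u).1 hy), rfl⟩

end RingHom

theorem rel_iff_rel_iterate {α : Type*} (r : α → α → Prop) {σ : α → α}
    (h : ∀ x y, r x y ↔ r (σ x) (σ y)) (m : ℕ) (x y : α) :
    r x y ↔ r (σ^[m] x) (σ^[m] y) := by
  induction m with
  | zero => rfl
  | succ m ih => rw [iterate_succ_apply', iterate_succ_apply']; exact ih.trans (h _ _)

section Lift

variable {Ω L : Type*} [Field Ω] [Field L] {σ : Ω →+* Ω} {K : Subfield Ω} {τ : L →+* L}
  {f : K →+* L}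

theorem isAlgebraic_fieldRange_of_semiconj {φ : Ω →+* Ω} (hφ : ∀ x ∈ K, φ x ∈ K) {ψ : L →+* L}
    (hf : Semiconj f (φ.restrict K K hφ) ψ) {z : Ω} (hz : IsAlgebraic K z) (hφz : φ z ∈ K) :
    IsAlgebraic ψ.fieldRange (f ⟨φ z, hφz⟩) := by
  obtain ⟨p, hp0, hpz⟩ := hz
  refine ⟨p.map (ψ.rangeRestrictField.comp f),
    (Polynomial.map_ne_zero_iff (RingHom.injective _)).2 hp0, ?_⟩
  have hroot : p.eval₂ (φ.restrict K K hφ) ⟨φ z, hφz⟩ = 0 := by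
    apply Subtype.ext
    calc K.subtype (p.eval₂ (φ.restrict K K hφ) ⟨φ z, hφz⟩)
        = p.eval₂ (φ.comp K.subtype) (φ z) := Polynomial.hom_eval₂ _ _ _ _
      _ = φ (Polynomial.aeval z p) := (Polynomial.hom_eval₂ _ _ _ _).symm
      _ = 0 := by rw [hpz, map_zero]
  calc Polynomial.aeval (f ⟨φ z, hφz⟩) (p.map (ψ.rangeRestrictField.comp f))
      = p.eval₂ (ψ.comp f) (f ⟨φ z, hφz⟩) := Polynomial.eval₂_map _ _ _
    _ = p.eval₂ (f.comp (φ.restrict K K hφ)) (f ⟨φ z, hφz⟩) := by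
        congr 1; exact RingHom.ext fun c => (hf c).symm
    _ = 0 := by rw [← Polynomial.hom_eval₂, hroot, map_zero]

/-- `y` is the image of `z` under the extension of `f` to the inversive closure: `y` stands for
`τ⁻ᵐ (f (σᵐ z))` for every large `m`. -/
def IsLift (σ : Ω →+* Ω) (K : Subfield Ω) (τ : L →+* L) (f : K →+* L) (z : Ω) (y : L) : Prop :=
  ∀ᶠ m in atTop, ∃ a : K, (a : Ω) = σ^[m] z ∧ τ^[m] y = f a

namespace IsLift

variable {z z' : Ω} {y y' : L}

theorem eq (h : IsLift σ K τ f z y) (h' : IsLift σ K τ f z y') : y = y' := by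
  obtain ⟨m, ⟨a, ha, hy⟩, ⟨a', ha', hy'⟩⟩ := (h.and h').exists
  obtain rfl : a = a' := Subtype.ext (ha.trans ha'.symm)
  exact τ.injective.iterate m (hy.trans hy'.symm)

theorem add (h : IsLift σ K τ f z y) (h' : IsLift σ K τ f z' y') :
    IsLift σ K τ f (z + z') (y + y') := by
  filter_upwards [h, h'] with m ⟨a, ha, hy⟩ ⟨a', ha', hy'⟩
  exact ⟨a + a', by simp [ha, ha', iterate_map_add], by simp [hy, hy', iterate_map_add]⟩

theorem mul (h : IsLift σ K τ f z y) (h' : IsLift σ K τ f z' y') :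
    IsLift σ K τ f (z * z') (y * y') := by
  filter_upwards [h, h'] with m ⟨a, ha, hy⟩ ⟨a', ha', hy'⟩
  exact ⟨a * a', by simp [ha, ha', iterate_map_mul], by simp [hy, hy', iterate_map_mul]⟩

theorem apply (h : IsLift σ K τ f z y) : IsLift σ K τ f (σ z) (τ y) := by
  filter_upwards [(tendsto_add_atTop_nat 1).eventually h] with m ⟨a, ha, hy⟩
  exact ⟨a, by rwa [← iterate_succ_apply], by rwa [← iterate_succ_apply]⟩

theorem valuation_le_iff {Γ₀ Δ : Type*} [LinearOrderedCommGroupWithZero Γ₀]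
    [LinearOrderedCommGroupWithZero Δ] {v : Valuation Ω Γ₀} {w : Valuation L Δ}
    (hσv : ∀ x y, v x ≤ v y ↔ v (σ x) ≤ v (σ y)) (hτw : ∀ x y, w x ≤ w y ↔ w (τ x) ≤ w (τ y))
    (hf : ∀ a b : K, v (a : Ω) ≤ v (b : Ω) ↔ w (f a) ≤ w (f b))
    (h : IsLift σ K τ f z y) (h' : IsLift σ K τ f z' y') : v z ≤ v z' ↔ w y ≤ w y' := by
  obtain ⟨m, ⟨a, ha, hy⟩, ⟨a', ha', hy'⟩⟩ := (h.and h').exists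
  rw [rel_iff_rel_iterate (fun x y => v x ≤ v y) hσv m,
    rel_iff_rel_iterate (fun x y => w x ≤ w y) hτw m]
  simp only [← ha, ← ha', hy, hy', hf]

end IsLift

theorem coe_iterate_restrict (hσK : ∀ x ∈ K, σ x ∈ K) (m : ℕ) (a : K) :
    ((σ.restrict K K hσK)^[m] a : Ω) = σ^[m] a :=
  Semiconj.iterate_right (f := Subtype.val) (fun _ => rfl) m a

theorem isLift_coe (hσK : ∀ x ∈ K, σ x ∈ K) (hf : Semiconj f (σ.restrict K K hσK) τ) (a : K) :
    IsLift σ K τ f a (f a) :=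
  Eventually.of_forall fun m =>
    ⟨_, coe_iterate_restrict hσK m a, (hf.iterate_right m a).symm⟩

theorem exists_isLift (hσK : ∀ x ∈ K, σ x ∈ K) (hf : Semiconj f (σ.restrict K K hσK) τ)
    (hτ : ∀ y, IsAlgebraic τ.fieldRange y → y ∈ τ.fieldRange) {z : Ω} (hz : IsAlgebraic K z)
    (hn : ∃ n, σ^[n] z ∈ K) : ∃ y, IsLift σ K τ f z y := by
  obtain ⟨n, hn⟩ := hn
  have hσnK : ∀ x ∈ K, (σ ^ n) x ∈ K := fun x hx => (Set.MapsTo.iterate hσK n) hx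
  have hfn : Semiconj f ((σ ^ n).restrict K K hσnK) ⇑(τ ^ n) := fun a => by
    rw [RingHom.coe_pow, ← hf.iterate_right n a]
    exact congrArg f (Subtype.ext (coe_iterate_restrict hσK n a).symm)
  obtain ⟨y, hy⟩ := RingHom.mem_fieldRange_pow_of_isAlgebraic hτ n
    (isAlgebraic_fieldRange_of_semiconj hσnK hfn hz hn)
  refine ⟨y, eventually_atTop.2 ⟨n, fun m hm => ?_⟩⟩
  obtain ⟨k, rfl⟩ := Nat.exists_eq_add_of_le' hm
  refine ⟨(σ.restrict K K hσK)^[k] ⟨_, hn⟩, ?_, ?_⟩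
  · rw [coe_iterate_restrict, iterate_add_apply]
  · rw [iterate_add_apply, ← RingHom.coe_pow τ n, hy, hf.iterate_right]; rfl

theorem exists_ringHom_isLift (hσK : ∀ x ∈ K, σ x ∈ K) (hf : Semiconj f (σ.restrict K K hσK) τ)
    (E : Subfield Ω) (hE : ∀ z : E, ∃ y, IsLift σ K τ f z y) :
    ∃ g : E →+* L, ∀ z : E, IsLift σ K τ f z (g z) := by
  choose g hg using hE
  exact ⟨{ toFun := g
           map_one' := (hg 1).eq (by simpa using isLift_coe hσK hf 1)
           map_mul' := fun z z' => (hg _).eq ((hg z).mul (hg z'))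
           map_zero' := (hg 0).eq (by simpa using isLift_coe hσK hf 0)
           map_add' := fun z z' => (hg _).eq ((hg z).add (hg z')) }, hg⟩

theorem isLift_of_semiconj (hσK : ∀ x ∈ K, σ x ∈ K) {E : Subfield Ω} (hσE : ∀ x ∈ E, σ x ∈ E)
    {g : E →+* L} (hgK : ∀ (a : K) (ha : (a : Ω) ∈ E), g ⟨a, ha⟩ = f a)
    (hgσ : Semiconj g (σ.restrict E E hσE) τ)
    {z : E} (hz : ∃ n, σ^[n] z ∈ K) : IsLift σ K τ f z (g z) := by
  obtain ⟨n, hn⟩ := hz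
  refine eventually_atTop.2 ⟨n, fun m hm => ?_⟩
  obtain ⟨k, rfl⟩ := Nat.exists_eq_add_of_le' hm
  have hmK : σ^[k + n] z ∈ K := by
    rw [iterate_add_apply]; exact Set.MapsTo.iterate hσK k hn
  refine ⟨⟨_, hmK⟩, rfl, ?_⟩
  rw [← hgσ.iterate_right, ← hgK _ (Set.MapsTo.iterate hσE _ z.2)]
  exact congrArg g (Subtype.ext (coe_iterate_restrict hσE _ z))

end Lift

theorem FE_closure_universal_property
    {Ω Γ₀ : Type*} [Field Ω] [LinearOrderedCommGroupWithZero Γ₀]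
    (v : Valuation Ω Γ₀) (σ : Ω →+* Ω) (K : Subfield Ω)
    (hσK : ∀ x ∈ K, σ x ∈ K)
    (hσv : ∀ x y : Ω, v x ≤ v y ↔ v (σ x) ≤ v (σ y))
    (hsurj : Function.Surjective σ)
    (hinv : ∀ x : Ω, ∃ n : ℕ, (σ : Ω → Ω)^[n] x ∈ K)
    -- the FE-closure: the relative algebraic closure of K in Ω = K_inv
    (KFE : Subfield Ω) (hKFE : (KFE : Set Ω) = {x : Ω | IsAlgebraic K x}) :
    -- (a) σ(K_FE) is relatively algebraically closed in K_FE
    (∀ x ∈ KFE, IsAlgebraic (Subfield.closure (σ '' (KFE : Set Ω))) x →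
        x ∈ σ '' (KFE : Set Ω)) ∧
    -- (b) universal property
    (∀ (L : Type*) (Δ : Type*), ∀ (_ : Field L) (_ : CharZero L)
        (_ : LinearOrderedCommGroupWithZero Δ),
      ∀ (w : Valuation L Δ) (τ : L →+* L) (f : K →+* L),
        -- f is a valued difference field embedding of K into L
        (∀ x y : K, v (x : Ω) ≤ v (y : Ω) ↔ w (f x) ≤ w (f y)) →
        (∀ x : K, f ⟨σ (x : Ω), hσK _ x.2⟩ = τ (f x)) →
        (∀ y z : L, w y ≤ w z ↔ w (τ y) ≤ w (τ z)) →
        -- L is a model of FE: τ(L) is relatively algebraically closed in L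
        (∀ y : L, IsAlgebraic τ.fieldRange y → y ∈ τ.fieldRange) →
        -- unique embedding of K_FE into L over K, as valued difference fields
        ∃! g : KFE →+* L,
          (∀ x : K, g ⟨(x : Ω), by
              rw [show ((x : Ω) ∈ KFE) = ((x : Ω) ∈ (KFE : Set Ω)) from rfl, hKFE]
              exact (isAlgebraic_algebraMap x)⟩ = f x) ∧
          (∀ z z' : KFE, v (z : Ω) ≤ v (z' : Ω) ↔ w (g z) ≤ w (g z')) ∧
          (∀ z : KFE, ∀ hz : σ (z : Ω) ∈ KFE, g ⟨σ (z : Ω), hz⟩ = τ (g z))) := by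
  have hKFE : ∀ x, x ∈ KFE ↔ IsAlgebraic K x := Set.ext_iff.1 hKFE
  refine ⟨fun x _ hx => ?_, fun L Δ _ _ _ w τ f hf hfτ hτw hFE => ?_⟩
  · rw [← Subfield.coe_map, Subfield.closure_eq] at hx
    exact Subfield.mem_map_of_isAlgebraic hsurj hKFE hx
  have hσKFE : ∀ x ∈ KFE, σ x ∈ KFE := fun x hx =>
    (hKFE _).2 (Subfield.isAlgebraic_apply hσK ((hKFE x).1 hx))
  obtain ⟨g, hg⟩ := exists_ringHom_isLift hσK hfτ KFE fun z =>
    exists_isLift hσK hfτ hFE ((hKFE z).1 z.2) (hinv z)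
  refine ⟨g, ⟨fun a => (hg _).eq (isLift_coe hσK hfτ a),
    fun z z' => (hg z).valuation_le_iff hσv hτw hf (hg z'),
    fun z _ => (hg _).eq (hg z).apply⟩, ?_⟩
  rintro g' ⟨hg'K, -, hg'σ⟩
  ext z
  exact (isLift_of_semiconj hσK hσKFE (fun a _ => hg'K a) (fun z => hg'σ z _) (hinv z)).eq
    (hg z)
end

section
/- Let (K,v,σ) be a valued difference field which is weakly σ-henselian. Then for any a ∈ O_K and any nonzero ε ∈ m_K, there exists b ∈ O_K such that σ(b) − εb − a = 0. -/
/-!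
Basic notions for valued difference fields (K,v,σ), following the paper.

A difference polynomial p(X) = P(X, σ(X), …, σ^n(X)) is represented by a
multivariate polynomial `P : MvPolynomial (Fin (n+1)) K`; its evaluation at
`a` substitutes `σ^i(a)` for the i-th variable.  `diffDeriv J P` is the
Taylor coefficient p_J = (1/J!)·∂^J P (characteristic zero).  We use
Mathlib's multiplicative convention for valuations, so the additive
condition "v x > v y" of the paper becomes "v x < v y", and the additive
pairing I(γ) = Σ iₖ σ_Γ^k(γ) becomes the product `idxVal`.
-/

open scoped Classical

/-- Evaluation of the difference polynomial with underlying polynomial `P`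
at `a`: substitute `σ^i(a)` for the `i`-th variable. -/
noncomputable def diffEval {K : Type*} [Field K] (σ : K →+* K) {n : ℕ}
    (P : MvPolynomial (Fin (n + 1)) K) (a : K) : K :=
  MvPolynomial.eval (fun i : Fin (n + 1) => (σ : K → K)^[(i : ℕ)] a) P

/-- The Taylor coefficient p_J = (1/J!)·∂^J P of a difference polynomial
(characteristic zero). -/
noncomputable def diffDeriv {K : Type*} [Field K] [CharZero K] {n : ℕ}
    (J : Fin (n + 1) →₀ ℕ) (P : MvPolynomial (Fin (n + 1)) K) :
    MvPolynomial (Fin (n + 1)) K :=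
  (J.prod fun _ k => ((Nat.factorial k : K)))⁻¹ •
    ((List.ofFn fun i : Fin (n + 1) =>
        ((MvPolynomial.pderiv (R := K) i).toLinearMap ^ (J i))).prod P)

/-- The multiplicative rendering of the additive pairing
I(γ) = i₀·γ + i₁·σ_Γ(γ) + ⋯ + iₙ·σ_Γ^n(γ). -/
def idxVal {Γ₀ : Type*} [LinearOrderedCommGroupWithZero Γ₀] {n : ℕ}
    (sΓ : Γ₀ →*₀ Γ₀) (J : Fin (n + 1) →₀ ℕ) (γ : Γ₀) : Γ₀ :=
  J.prod fun i k => ((sΓ : Γ₀ → Γ₀)^[(i : ℕ)] γ) ^ k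

/-- `p` is in σ-henselian configuration at `a` with radius `γ`. -/
def InSigmaHenselianConfig {K Γ₀ : Type*} [Field K] [CharZero K]
    [LinearOrderedCommGroupWithZero Γ₀]
    (v : Valuation K Γ₀) (σ : K →+* K) (sΓ : Γ₀ →*₀ Γ₀) {n : ℕ}
    (P : MvPolynomial (Fin (n + 1)) K) (a : K) (γ : Γ₀) : Prop :=
  γ ≠ 0 ∧
  (∃ i : Fin (n + 1),
     v (diffEval σ P a)
       = v (diffEval σ (diffDeriv (Finsupp.single i 1) P) a) *
           (sΓ : Γ₀ → Γ₀)^[(i : ℕ)] γ) ∧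
  (∀ j : Fin (n + 1),
     v (diffEval σ (diffDeriv (Finsupp.single j 1) P) a) *
         (sΓ : Γ₀ → Γ₀)^[(j : ℕ)] γ ≤ v (diffEval σ P a)) ∧
  (∀ J L : Fin (n + 1) →₀ ℕ, J ≠ 0 → L ≠ 0 → diffDeriv J P ≠ 0 →
     v (diffEval σ (diffDeriv (J + L) P) a) * idxVal sΓ (J + L) γ
       < v (diffEval σ (diffDeriv J P) a) * idxVal sΓ J γ)

/-- Weak σ-henselianity: difference polynomials `p` with `p' ≠ 0` in
σ-henselian configuration have roots at the prescribed distance. -/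
def WeaklySigmaHenselian {K Γ₀ : Type*} [Field K] [CharZero K]
    [LinearOrderedCommGroupWithZero Γ₀]
    (v : Valuation K Γ₀) (σ : K →+* K) (sΓ : Γ₀ →*₀ Γ₀) : Prop :=
  ∀ (n : ℕ) (P : MvPolynomial (Fin (n + 1)) K) (a : K) (γ : Γ₀),
    MvPolynomial.pderiv (0 : Fin (n + 1)) P ≠ 0 →
    InSigmaHenselianConfig v σ sΓ P a γ →
    ∃ b : K, diffEval σ P b = 0 ∧ v (b - a) = γ

/-- Strong σ-henselianity: all difference polynomials in σ-henselian
configuration have roots at the prescribed distance. -/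
def StronglySigmaHenselian {K Γ₀ : Type*} [Field K] [CharZero K]
    [LinearOrderedCommGroupWithZero Γ₀]
    (v : Valuation K Γ₀) (σ : K →+* K) (sΓ : Γ₀ →*₀ Γ₀) : Prop :=
  ∀ (n : ℕ) (P : MvPolynomial (Fin (n + 1)) K) (a : K) (γ : Γ₀),
    InSigmaHenselianConfig v σ sΓ P a γ →
    ∃ b : K, diffEval σ P b = 0 ∧ v (b - a) = γ

/-- Residue characteristic zero (together with `CharZero K`,
equicharacteristic zero): nonzero integers are units of `O_K`. -/
def ResidueCharZero {K Γ₀ : Type*} [Field K]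
    [LinearOrderedCommGroupWithZero Γ₀] (v : Valuation K Γ₀) : Prop :=
  ∀ m : ℕ, 0 < m → v (m : K) = 1

/-!
The difference polynomial p(X) = σ(X) − εX − a is linear, with p_{(1,0)} = −ε, p_{(0,1)} = 1 and
no nonzero Taylor coefficients of higher order, so the last condition of a σ-henselian
configuration holds automatically (its left side is 0) and p is in σ-henselian configuration at a₀
with radius γ ≠ 0 exactly when
max(v(ε)·γ, σ_Γ(γ)) = v(p(a₀)) (multiplicative notation). Such a γ exists because v(p(a₀)) lies in
the image of σ_Γ. Starting from a solution a₀ ∈ O_K of the residue equation σ_res(x) = res(a)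
(the term εx vanishes modulo m_K), we have v(p(a₀)) < 1, hence γ < 1, and the root b given by weak
σ-henselianity satisfies v(b − a₀) = γ, so b ∈ O_K.
-/

open MvPolynomial

theorem Finsupp.exists_eq_single_of_degree_eq_one {ι : Type*} {d : ι →₀ ℕ} (h : d.degree = 1) :
    ∃ i, d = Finsupp.single i 1 := by
  obtain ⟨i, hi⟩ : ∃ i, d i ≠ 0 := by
    by_contra! h0
    simp [show d = 0 from Finsupp.ext h0] at h
  have hle : Finsupp.single i 1 ≤ d := Finsupp.single_le_iff.mpr (Nat.one_le_iff_ne_zero.mpr hi)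
  have hrest : (d - Finsupp.single i 1).degree = 0 := by
    have := congrArg Finsupp.degree (tsub_add_cancel_of_le hle)
    rw [map_add, Finsupp.degree_single, h] at this
    omega
  rw [Finsupp.degree_eq_zero_iff, tsub_eq_zero_iff_le] at hrest
  exact ⟨i, le_antisymm hrest hle⟩

theorem iterate_map_ne_zero {Γ₀ : Type*} [LinearOrderedCommGroupWithZero Γ₀] (sΓ : Γ₀ →*₀ Γ₀)
    {γ : Γ₀} (hγ : γ ≠ 0) (k : ℕ) : (sΓ : Γ₀ → Γ₀)^[k] γ ≠ 0 :=
  Function.Iterate.rec (· ≠ 0) hγ (fun _ h => (map_ne_zero sΓ).mpr h) k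

theorem idxVal_ne_zero {Γ₀ : Type*} [LinearOrderedCommGroupWithZero Γ₀] {n : ℕ}
    (sΓ : Γ₀ →*₀ Γ₀) (J : Fin (n + 1) →₀ ℕ) {γ : Γ₀} (hγ : γ ≠ 0) : idxVal sΓ J γ ≠ 0 :=
  Finsupp.prod_ne_zero_iff.mpr fun _ _ => pow_ne_zero _ (iterate_map_ne_zero sΓ hγ _)

section LinearDiffPoly

variable {K : Type*} [Field K]

/-- σ(X) − εX − a, the variable `i` standing for σⁱ(X). -/
noncomputable def linearDiffPoly (ε a : K) : MvPolynomial (Fin 2) K :=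
  X 1 - C ε * X 0 - C a

theorem diffEval_linearDiffPoly (σ : K →+* K) (ε a b : K) :
    diffEval σ (linearDiffPoly ε a) b = σ b - ε * b - a := by
  simp [diffEval, linearDiffPoly]

theorem pderiv_zero_linearDiffPoly (ε a : K) : pderiv 0 (linearDiffPoly ε a) = -C ε := by
  simp [linearDiffPoly]

theorem pderiv_one_linearDiffPoly (ε a : K) : pderiv 1 (linearDiffPoly ε a) = 1 := by
  simp [linearDiffPoly]

variable [CharZero K]

theorem diffDeriv_single_zero_linearDiffPoly (ε a : K) :
    diffDeriv (Finsupp.single 0 1) (linearDiffPoly ε a) = -C ε := by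
  simp [diffDeriv, List.ofFn_succ, pderiv_zero_linearDiffPoly]

theorem diffDeriv_single_one_linearDiffPoly (ε a : K) :
    diffDeriv (Finsupp.single 1 1) (linearDiffPoly ε a) = 1 := by
  simp [diffDeriv, List.ofFn_succ, pderiv_one_linearDiffPoly]

theorem diffDeriv_linearDiffPoly_eq_zero (ε a : K) {J : Fin 2 →₀ ℕ} (hJ : 2 ≤ J.degree) :
    diffDeriv J (linearDiffPoly ε a) = 0 := by
  rw [Finsupp.degree_eq_sum, Fin.sum_univ_two] at hJ
  suffices (pderiv 0)^[J 0] ((pderiv 1)^[J 1] (linearDiffPoly ε a)) = 0 by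
    simp [diffDeriv, List.ofFn_succ, Module.End.pow_apply, this]
  obtain h1 | h1 | h1 : J 1 = 0 ∨ J 1 = 1 ∨ 2 ≤ J 1 := by omega
  · obtain ⟨k, hk⟩ : ∃ k, J 0 = k + 2 := ⟨J 0 - 2, by omega⟩
    simp [h1, hk, pderiv_zero_linearDiffPoly]
  · obtain ⟨k, hk⟩ : ∃ k, J 0 = k + 1 := ⟨J 0 - 1, by omega⟩
    simp [h1, hk, pderiv_one_linearDiffPoly]
  · obtain ⟨k, hk⟩ : ∃ k, J 1 = k + 2 := ⟨J 1 - 2, by omega⟩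
    simp [hk, pderiv_one_linearDiffPoly]

end LinearDiffPoly

theorem inSigmaHenselianConfig_linearDiffPoly {K Γ₀ : Type*} [Field K] [CharZero K]
    [LinearOrderedCommGroupWithZero Γ₀] (v : Valuation K Γ₀) (σ : K →+* K) (sΓ : Γ₀ →*₀ Γ₀)
    {ε a a₀ : K} (hε : ε ≠ 0) {γ : Γ₀} (hγ : γ ≠ 0)
    (hmax : max (v ε * γ) (sΓ γ) = v (σ a₀ - ε * a₀ - a)) :
    InSigmaHenselianConfig v σ sΓ (linearDiffPoly ε a) a₀ γ := by
  have hval₀ : v (diffEval σ (diffDeriv (Finsupp.single 0 1) (linearDiffPoly ε a)) a₀) = v ε := by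
    simp [diffDeriv_single_zero_linearDiffPoly, diffEval]
  have hval₁ : v (diffEval σ (diffDeriv (Finsupp.single 1 1) (linearDiffPoly ε a)) a₀) = 1 := by
    simp [diffDeriv_single_one_linearDiffPoly, diffEval]
  rw [← diffEval_linearDiffPoly] at hmax
  refine ⟨hγ, ?_, fun j => ?_, fun J L hJ hL hJP => ?_⟩
  · rcases max_choice (v ε * γ) (sΓ γ) with h | h
    · exact ⟨0, by simpa [hval₀, hmax] using h⟩
    · exact ⟨1, by simpa [hval₁, hmax] using h⟩
  · fin_cases j
    · simp [hval₀, ← hmax]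
    · simp [hval₁, ← hmax]
  · have hJ₀ : J.degree ≠ 0 := (Finsupp.degree_eq_zero_iff J).not.mpr hJ
    have hL₀ : L.degree ≠ 0 := (Finsupp.degree_eq_zero_iff L).not.mpr hL
    rw [diffDeriv_linearDiffPoly_eq_zero ε a (by rw [map_add]; omega), diffEval, map_zero,
      map_zero, zero_mul]
    obtain ⟨i, rfl⟩ : ∃ i, J = Finsupp.single i 1 := by
      refine Finsupp.exists_eq_single_of_degree_eq_one ?_
      by_contra h
      exact hJP (diffDeriv_linearDiffPoly_eq_zero ε a (by omega))
    refine zero_lt_iff.mpr (mul_ne_zero ?_ (idxVal_ne_zero sΓ _ hγ))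
    fin_cases i
    · simpa [hval₀] using hε
    · simp [hval₁]

theorem exists_max_mul_map_eq {Γ₀ : Type*} [LinearOrderedCommGroupWithZero Γ₀]
    {sΓ : Γ₀ →*₀ Γ₀} (hmono : Monotone sΓ) {c δ γ₁ : Γ₀} (hc : c ≠ 0) (hδ : δ ≠ 0)
    (hγ₁ : sΓ γ₁ = δ) : ∃ γ, γ ≠ 0 ∧ max (c * γ) (sΓ γ) = δ := by
  by_cases h : sΓ (δ / c) ≤ δ
  · exact ⟨δ / c, div_ne_zero hδ hc, by rw [mul_div_cancel₀ _ hc, max_eq_left h]⟩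
  · have hγ₁c : γ₁ ≤ δ / c := not_lt.mp fun hlt => h ((hmono hlt.le).trans hγ₁.le)
    refine ⟨γ₁, fun h₀ => hδ (by simpa [h₀] using hγ₁.symm), ?_⟩
    rw [max_eq_right, hγ₁]
    rwa [hγ₁, mul_comm, ← le_div_iff₀ (zero_lt_iff.mpr hc)]

theorem exists_residue_solution {K Γ₀ : Type*} [Field K] [LinearOrderedCommGroupWithZero Γ₀]
    (v : Valuation K Γ₀) (σ : K →+* K) {sΓ : Γ₀ →*₀ Γ₀} (hinj : Function.Injective sΓ)
    (hcomp : ∀ x : K, v (σ x) = sΓ (v x))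
    (hressurj : ∀ y : K, v y = 1 → ∃ x : K, v (σ x - y) < 1)
    {a ε : K} (ha : v a ≤ 1) (hε : v ε < 1) :
    ∃ a₀ : K, v a₀ ≤ 1 ∧ v (σ a₀ - ε * a₀ - a) < 1 := by
  rcases ha.lt_or_eq with ha | ha
  · exact ⟨0, by simp, by simpa using ha⟩
  obtain ⟨x, hx⟩ := hressurj a ha
  have hσx : v (σ x) = 1 := by
    have hx' : v (σ x - a) < v a := ha ▸ hx
    simpa [ha] using v.map_add_eq_of_lt_right hx'
  have hx₁ : v x = 1 := hinj (by rw [← hcomp, hσx, map_one])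
  refine ⟨x, hx₁.le, ?_⟩
  calc v (σ x - ε * x - a) = v ((σ x - a) - ε * x) := by ring_nf
    _ ≤ max (v (σ x - a)) (v (ε * x)) := v.map_sub _ _
    _ < 1 := max_lt hx (by rwa [v.map_mul, hx₁, mul_one])

theorem weaklySigmaHenselian_solves_linear_general
    {K Γ₀ : Type*} [Field K] [CharZero K] [LinearOrderedCommGroupWithZero Γ₀]
    (v : Valuation K Γ₀) (σ : K →+* K) (sΓ : Γ₀ →*₀ Γ₀)
    (hmono : StrictMono sΓ) (hcomp : ∀ x : K, v (σ x) = sΓ (v x))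
    -- σ_res surjective
    (hressurj : ∀ y : K, v y = 1 → ∃ x : K, v (σ x - y) < 1)
    -- σ_Γ surjective onto the value group
    (hΓsurj : ∀ b : K, b ≠ 0 → ∃ a : K, a ≠ 0 ∧ v (σ a) = v b)
    (hweak : WeaklySigmaHenselian v σ sΓ) :
    ∀ a : K, v a ≤ 1 → ∀ ε : K, ε ≠ 0 → v ε < 1 →
      ∃ b : K, v b ≤ 1 ∧ σ b - ε * b - a = 0 := by
  intro a ha ε hε hvε
  obtain ⟨a₀, ha₀, hq⟩ := exists_residue_solution v σ hmono.injective hcomp hressurj ha hvε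
  rcases eq_or_ne (σ a₀ - ε * a₀ - a) 0 with hq₀ | hq₀
  · exact ⟨a₀, ha₀, hq₀⟩
  obtain ⟨c, -, hc⟩ := hΓsurj _ hq₀
  obtain ⟨γ, hγ, hmax⟩ := exists_max_mul_map_eq hmono.monotone (v.ne_zero_iff.mpr hε)
    (v.ne_zero_iff.mpr hq₀) ((hcomp c).symm.trans hc)
  have hγ₁ : γ < 1 :=
    hmono.lt_iff_lt.mp (by rw [map_one]; exact (le_max_right _ _).trans_lt (hmax ▸ hq))
  obtain ⟨b, hb, hbv⟩ := hweak 1 (linearDiffPoly ε a) a₀ γ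
    (by simpa [pderiv_zero_linearDiffPoly] using hε)
    (inSigmaHenselianConfig_linearDiffPoly v σ sΓ hε hγ hmax)
  refine ⟨b, ?_, by rwa [diffEval_linearDiffPoly] at hb⟩
  have hb₁ := v.integer.add_mem (show v (b - a₀) ≤ 1 from hbv.le.trans hγ₁.le) ha₀
  rwa [sub_add_cancel] at hb₁

theorem weaklySigmaHenselian_solves_linear
    {K Γ₀ : Type*} [Field K] [CharZero K] [LinearOrderedCommGroupWithZero Γ₀]
    (v : Valuation K Γ₀) (σ : K →+* K) (sΓ : Γ₀ →*₀ Γ₀)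
    (hmono : StrictMono sΓ) (hcomp : ∀ x : K, v (σ x) = sΓ (v x))
    (hres0 : ResidueCharZero v)
    -- σ_res surjective
    (hressurj : ∀ y : K, v y = 1 → ∃ x : K, v (σ x - y) < 1)
    -- σ_Γ surjective onto the value group
    (hΓsurj : ∀ b : K, b ≠ 0 → ∃ a : K, a ≠ 0 ∧ v (σ a) = v b)
    (hweak : WeaklySigmaHenselian v σ sΓ) :
    ∀ a : K, v a ≤ 1 → ∀ ε : K, ε ≠ 0 → v ε < 1 →
      ∃ b : K, v b ≤ 1 ∧ σ b - ε * b - a = 0 :=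
  weaklySigmaHenselian_solves_linear_general v σ sΓ hmono hcomp hressurj hΓsurj hweak
end

section
/- Let K be a weakly σ-henselian valued difference field of residue characteristic zero satisfying FE, let E ⊆ K be a valued difference subfield, and suppose a, b are elements of extensions of E (with v(a) = v(b) = γ, a and b in the inversive cores of their ambient fields) that are both generic over E, meaning regular for every difference polynomial over E. Then for every difference polynomial p(X) = Σ_I a_I X^I over E, v(p(a)) = min_I { v(a_I) + I(γ) } = v(p(b)), and the map a ↦ b extends to a valued difference field isomorphism E⟨a⟩ → E⟨b⟩ over E. -/
/-!
Basic notions for valued difference fields (K,v,σ), following the paper.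

A difference polynomial p(X) = P(X, σ(X), …, σ^n(X)) is represented by a
multivariate polynomial `P : MvPolynomial (Fin (n+1)) K`; its evaluation at
`a` substitutes `σ^i(a)` for the i-th variable.  `diffDeriv J P` is the
Taylor coefficient p_J = (1/J!)·∂^J P (characteristic zero).  We use
Mathlib's multiplicative convention for valuations, so the additive
condition "v x > v y" of the paper becomes "v x < v y", and the additive
pairing I(γ) = Σ iₖ σ_Γ^k(γ) becomes the product `idxVal`.
-/

open scoped Classical

instance {Γ₀ : Type*} [LinearOrderedCommGroupWithZero Γ₀] : OrderBot Γ₀ :=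
  { bot := 0, bot_le := fun _ => zero_le' }

/-- `a ∈ L` is generic over `E` (embedded in `L` via `f`): it is regular for
every difference polynomial over `E`, i.e. v(p(a)) = min_I (v(a_I)+v(a^I))
(multiplicatively, the max over the support). -/
def GenericOver {E L Γ₀ : Type*} [Field E] [Field L]
    [LinearOrderedCommGroupWithZero Γ₀]
    (vE : Valuation E Γ₀) (w : Valuation L Γ₀) (τ : L →+* L) (f : E →+* L)
    (a : L) : Prop :=
  ∀ (n : ℕ) (P : MvPolynomial (Fin (n + 1)) E),
    w (diffEval τ (MvPolynomial.map f P) a) =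
      P.support.sup fun m =>
        vE (P.coeff m) * w (∏ i : Fin (n + 1), ((τ : L → L)^[(i : ℕ)] a) ^ m i)


/-!
Index difference polynomials by `ℤ`, with `X k` standing for `σ^k(a)`; since `a` lies in the
inversive core, evaluation at `a` is a ring map `evalInt` from `E[X_k : k ∈ ℤ]` to `L` whose image
generates `E⟨a⟩`. After the shift `X_i ↦ X_{i-m}` every `r` is an ordinary difference polynomial `P`,
and `σ^m` carries `evalInt r` to `P^{σ^m}(a)`. Genericity gives
`v(P^{σ^m}(a)) = max_I v(σ^m(a_I)) · I(γ)`, which depends only on `E`, `σ_Γ` and `γ`; as `σ_Γ` is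
injective, `v(evalInt r)` is the same for `a` and `b` and vanishes only at `r = 0`. So both
evaluations are injective, extend to the fraction field with images `E⟨a⟩` and `E⟨b⟩`, and the
composite `E⟨a⟩ ≃ Frac ≃ E⟨b⟩` preserves valuations and commutes with `σ`.
-/

namespace ValuedDifferenceField

open MvPolynomial

section IterateInt

variable {L : Type*} [Field L] (τ : L →+* L) {a : L} (ha : ∀ n : ℕ, ∃ y : L, (τ : L → L)^[n] y = a)

/-- `σ^k(a)` for `k : ℤ`; the negative iterates are the preimages, unique since `τ` is injective. -/
noncomputable def iterateInt (k : ℤ) : L :=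
  if 0 ≤ k then (τ : L → L)^[k.toNat] a else Classical.choose (ha (-k).toNat)

@[simp]
theorem iterateInt_natCast (n : ℕ) : iterateInt τ ha n = (τ : L → L)^[n] a := by
  simp [iterateInt]

@[simp]
theorem iterateInt_zero : iterateInt τ ha 0 = a := by
  simpa using iterateInt_natCast τ ha 0

theorem iterate_iterateInt_neg_natCast (n : ℕ) : (τ : L → L)^[n] (iterateInt τ ha (-n)) = a := by
  rcases Nat.eq_zero_or_pos n with rfl | hn
  · simp
  · rw [iterateInt, if_neg (by omega)]
    convert Classical.choose_spec (ha n) using 3; simp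

theorem map_iterateInt (k : ℤ) : τ (iterateInt τ ha k) = iterateInt τ ha (k + 1) := by
  obtain ⟨n, rfl | rfl⟩ := Int.eq_nat_or_neg k
  · rw [← Nat.cast_succ, iterateInt_natCast, iterateInt_natCast, Function.iterate_succ_apply']
  · cases n with
    | zero => simpa using (iterateInt_natCast τ ha 1).symm
    | succ n =>
      apply τ.injective.iterate n
      rw [← Function.iterate_succ_apply, show -((n + 1 : ℕ) : ℤ) + 1 = -n by push_cast; ring,
        iterate_iterateInt_neg_natCast, iterate_iterateInt_neg_natCast]

theorem iterate_iterateInt (n : ℕ) (k : ℤ) :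
    (τ : L → L)^[n] (iterateInt τ ha k) = iterateInt τ ha (k + n) := by
  induction n with
  | zero => simp
  | succ n ih =>
    rw [Function.iterate_succ_apply', ih, map_iterateInt]
    push_cast
    ring_nf

theorem exists_iterate_iterateInt (k : ℤ) :
    ∃ n : ℕ, (τ : L → L)^[n] (iterateInt τ ha k) = a ∨ iterateInt τ ha k = (τ : L → L)^[n] a := by
  obtain ⟨n, rfl | rfl⟩ := Int.eq_nat_or_neg k
  · exact ⟨n, Or.inr (iterateInt_natCast τ ha n)⟩
  · exact ⟨n, Or.inl (iterate_iterateInt_neg_natCast τ ha n)⟩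

end IterateInt

section EvalInt

variable {E L : Type*} [Field E] [Field L]

noncomputable def diffShift (σE : E →+* E) : MvPolynomial ℤ E →+* MvPolynomial ℤ E :=
  eval₂Hom (C.comp σE) fun k => X (k + 1)

variable (τ : L →+* L) {a : L} (ha : ∀ n : ℕ, ∃ y : L, (τ : L → L)^[n] y = a) (f : E →+* L)

noncomputable def evalInt : MvPolynomial ℤ E →+* L :=
  eval₂Hom f (iterateInt τ ha)

@[simp]
theorem evalInt_C (x : E) : evalInt τ ha f (C x) = f x := by
  simp [evalInt]

@[simp]
theorem evalInt_X (k : ℤ) : evalInt τ ha f (X k) = iterateInt τ ha k := by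
  simp [evalInt]

theorem map_evalInt {σE : E →+* E} (hfσ : ∀ x : E, f (σE x) = τ (f x))
    (r : MvPolynomial ℤ E) : τ (evalInt τ ha f r) = evalInt τ ha f (diffShift σE r) := by
  suffices τ.comp (evalInt τ ha f) = (evalInt τ ha f).comp (diffShift σE) from
    DFunLike.congr_fun this r
  apply ringHom_ext <;> intro <;> simp [diffShift, hfσ, map_iterateInt]

theorem closure_eq_fieldRange_lift (F : Type*) [Field F] [Algebra (MvPolynomial ℤ E) F]
    [IsFractionRing (MvPolynomial ℤ E) F] (hinj : Function.Injective (evalInt τ ha f)) :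
    Subfield.closure {x : L | x ∈ Set.range f ∨
      (∃ n : ℕ, (τ : L → L)^[n] x = a) ∨ (∃ n : ℕ, x = (τ : L → L)^[n] a)} =
      (IsFractionRing.lift hinj : F →+* L).fieldRange := by
  rw [IsFractionRing.lift_fieldRange]
  apply le_antisymm
  · rw [Subfield.closure_le]
    rintro x (⟨y, rfl⟩ | ⟨n, hn⟩ | ⟨n, rfl⟩)
    · exact Subfield.subset_closure ⟨C y, evalInt_C τ ha f y⟩
    · have hx : x = iterateInt τ ha (-n) :=
        τ.injective.iterate n (hn.trans (iterate_iterateInt_neg_natCast τ ha n).symm)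
      exact Subfield.subset_closure ⟨X (-n), by rw [evalInt_X, hx]⟩
    · exact Subfield.subset_closure ⟨X n, by rw [evalInt_X, iterateInt_natCast]⟩
  · rw [Subfield.closure_le]
    rintro _ ⟨r, rfl⟩
    show eval₂ f (iterateInt τ ha) r ∈ _
    apply eval₂_mem
    · exact fun i _ => Subfield.subset_closure (Or.inl ⟨r.coeff i, rfl⟩)
    intro k
    obtain ⟨n, hn⟩ := exists_iterate_iterateInt τ ha k
    exact Subfield.subset_closure (Or.inr (hn.imp (fun h => ⟨n, h⟩) fun h => ⟨n, h⟩))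

end EvalInt

theorem exists_eq_rename_sub {R : Type*} [CommSemiring R] (r : MvPolynomial ℤ R) :
    ∃ (m n : ℕ) (P : MvPolynomial (Fin (n + 1)) R),
      r = rename (fun i : Fin (n + 1) => (i : ℤ) - m) P := by
  obtain ⟨n₀, g, -, q, rfl⟩ := exists_fin_rename r
  set m : ℕ := Finset.univ.sup fun j : Fin n₀ => (g j).natAbs
  have hm : ∀ j, (g j).natAbs ≤ m := fun j =>
    Finset.le_sup (f := fun j : Fin n₀ => (g j).natAbs) (Finset.mem_univ j)
  have hlt : ∀ j : Fin n₀, (g j + m).toNat < 2 * m + 1 := fun j => by have := hm j; omega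
  refine ⟨m, 2 * m, rename (fun j => ⟨(g j + m).toNat, hlt j⟩) q, ?_⟩
  rw [rename_rename]
  congr 2
  funext j
  show g j = (((g j + m).toNat : ℕ) : ℤ) - m
  have := hm j
  omega

section Valuation

variable {E L Γ₀ : Type*} [Field E] [Field L] [LinearOrderedCommGroupWithZero Γ₀]
  {vE : Valuation E Γ₀} {sΓ : Γ₀ →*₀ Γ₀} {γ : Γ₀}

/-- The paper's `min_I (v(a_I) + I(γ))`, written multiplicatively. -/
def genericValue (vE : Valuation E Γ₀) (sΓ : Γ₀ →*₀ Γ₀) (γ : Γ₀) {n : ℕ}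
    (P : MvPolynomial (Fin (n + 1)) E) : Γ₀ :=
  P.support.sup fun J => vE (P.coeff J) * idxVal sΓ J γ

theorem iterate_ne_zero (hsΓ : Function.Injective sΓ) (hγ : γ ≠ 0) (i : ℕ) :
    (sΓ : Γ₀ → Γ₀)^[i] γ ≠ 0 := fun h =>
  hγ (hsΓ.iterate i (h.trans (Function.iterate_fixed (map_zero sΓ) i).symm))

theorem idxVal_ne_zero (hsΓ : Function.Injective sΓ) (hγ : γ ≠ 0) {n : ℕ} (J : Fin (n + 1) →₀ ℕ) :
    idxVal sΓ J γ ≠ 0 :=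
  Finsupp.prod_ne_zero_iff.2 fun i _ => pow_ne_zero _ (iterate_ne_zero hsΓ hγ i)

theorem genericValue_ne_zero (hsΓ : Function.Injective sΓ) (hγ : γ ≠ 0) {n : ℕ}
    {P : MvPolynomial (Fin (n + 1)) E} (hP : P ≠ 0) : genericValue vE sΓ γ P ≠ 0 := by
  obtain ⟨J, hJ⟩ := support_nonempty.2 hP
  have hterm : vE (P.coeff J) * idxVal sΓ J γ ≠ 0 :=
    mul_ne_zero ((Valuation.ne_zero_iff vE).2 (mem_support_iff.1 hJ)) (idxVal_ne_zero hsΓ hγ J)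
  exact ne_of_gt ((zero_lt_iff.2 hterm).trans_le
    (Finset.le_sup (f := fun J => vE (P.coeff J) * idxVal sΓ J γ) hJ))

variable {w : Valuation L Γ₀} {τ : L →+* L}

theorem valuation_prod_iterate_pow (hτ : ∀ y : L, w (τ y) = sΓ (w y)) {x : L} (hx : w x = γ)
    {n : ℕ} (J : Fin (n + 1) →₀ ℕ) :
    w (∏ i : Fin (n + 1), ((τ : L → L)^[(i : ℕ)] x) ^ J i) = idxVal sΓ J γ := by
  have hiter (i : ℕ) (y : L) : w ((τ : L → L)^[i] y) = (sΓ : Γ₀ → Γ₀)^[i] (w y) :=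
    Function.Semiconj.iterate_right hτ i y
  rw [map_prod, idxVal, Finsupp.prod_fintype _ _ fun _ => pow_zero _]
  simp only [map_pow, hiter, hx]

theorem GenericOver.valuation_diffEval {f : E →+* L} {a : L} (hgen : GenericOver vE w τ f a)
    (hτ : ∀ y : L, w (τ y) = sΓ (w y)) (hva : w a = γ) {n : ℕ} (P : MvPolynomial (Fin (n + 1)) E) :
    w (diffEval τ (map f P) a) = genericValue vE sΓ γ P := by
  simp only [hgen n P, valuation_prod_iterate_pow hτ hva, genericValue]

variable {σE : E →+* E} {f : E →+* L} {a : L} (ha : ∀ n : ℕ, ∃ y : L, (τ : L → L)^[n] y = a)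

theorem iterate_valuation_evalInt_rename (hτ : ∀ y : L, w (τ y) = sΓ (w y))
    (hfσ : ∀ x : E, f (σE x) = τ (f x)) (hva : w a = γ) (hgen : GenericOver vE w τ f a)
    (m n : ℕ) (P : MvPolynomial (Fin (n + 1)) E) :
    (sΓ : Γ₀ → Γ₀)^[m] (w (evalInt τ ha f (rename (fun i : Fin (n + 1) => (i : ℤ) - m) P))) =
      genericValue vE sΓ γ (map (σE ^ m) P) := by
  rw [← Function.Semiconj.iterate_right hτ m, ← GenericOver.valuation_diffEval hgen hτ hva]
  congr 1
  rw [evalInt, coe_eval₂Hom, eval₂_rename, ← RingHom.coe_pow, eval₂_comp_left, diffEval,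
    map_map, eval_map]
  congr 1
  · ext x
    simpa [RingHom.coe_pow] using (Function.Semiconj.iterate_right hfσ m x).symm
  · funext i
    simp [RingHom.coe_pow, iterate_iterateInt]

theorem evalInt_injective (hsΓ : Function.Injective sΓ) (hγ : γ ≠ 0)
    (hτ : ∀ y : L, w (τ y) = sΓ (w y)) (hfσ : ∀ x : E, f (σE x) = τ (f x)) (hva : w a = γ)
    (hgen : GenericOver vE w τ f a) : Function.Injective (evalInt τ ha f) := by
  refine (injective_iff_map_eq_zero _).2 fun r hr => ?_
  obtain ⟨m, n, P, rfl⟩ := exists_eq_rename_sub r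
  by_contra hne
  have hP : P ≠ 0 := by rintro rfl; exact hne (map_zero _)
  have hσP : map (σE ^ m) P ≠ 0 := by simpa using (map_injective _ (σE ^ m).injective).ne hP
  apply genericValue_ne_zero hsΓ hγ hσP
  rw [← iterate_valuation_evalInt_rename ha hτ hfσ hva hgen, hr, map_zero,
    Function.iterate_fixed (map_zero sΓ)]

end Valuation

section FractionRing

open IsFractionRing

variable {R L₁ L₂ : Type*} (F : Type*) [CommRing R] [Field F] [Algebra R F]
  [IsFractionRing R F] [Field L₁] [Field L₂] {Φ₁ : R →+* L₁} {Φ₂ : R →+* L₂}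
  (h₁ : Function.Injective Φ₁) (h₂ : Function.Injective Φ₂)

theorem exists_ringEquiv_lift {K₁ : Subfield L₁} {K₂ : Subfield L₂}
    (hK₁ : K₁ = (lift h₁ : F →+* L₁).fieldRange) (hK₂ : K₂ = (lift h₂ : F →+* L₂).fieldRange) :
    ∃ g : K₁ ≃+* K₂, ∀ (z : K₁) (u : F), (z : L₁) = lift h₁ u → (g z : L₂) = lift h₂ u := by
  subst hK₁ hK₂
  refine ⟨(lift h₁ : F →+* L₁).rangeRestrictFieldEquiv.symm.trans
    (lift h₂ : F →+* L₂).rangeRestrictFieldEquiv, fun z u hz => ?_⟩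
  obtain rfl : z = (lift h₁ : F →+* L₁).rangeRestrictFieldEquiv u := Subtype.ext hz
  simp

theorem valuation_lift_eq {Γ₀ : Type*} [LinearOrderedCommGroupWithZero Γ₀]
    {w₁ : Valuation L₁ Γ₀} {w₂ : Valuation L₂ Γ₀} (h : ∀ r, w₂ (Φ₂ r) = w₁ (Φ₁ r)) (u : F) :
    w₂ (lift h₂ u) = w₁ (lift h₁ u) := by
  obtain ⟨p, q, -, rfl⟩ := div_surjective (A := R) u
  simp only [map_div₀, lift_algebraMap, h]

theorem exists_map_lift_eq_lift (s : R →+* R) {τ₁ : L₁ →+* L₁} {τ₂ : L₂ →+* L₂}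
    (hs₁ : ∀ r, τ₁ (Φ₁ r) = Φ₁ (s r)) (hs₂ : ∀ r, τ₂ (Φ₂ r) = Φ₂ (s r)) (u : F) :
    ∃ u' : F, τ₁ (lift h₁ u) = lift h₁ u' ∧ τ₂ (lift h₂ u) = lift h₂ u' := by
  obtain ⟨p, q, -, rfl⟩ := div_surjective (A := R) u
  exact ⟨algebraMap R F (s p) / algebraMap R F (s q), by simp only [map_div₀, lift_algebraMap, hs₁],
    by simp only [map_div₀, lift_algebraMap, hs₂]⟩

end FractionRing

end ValuedDifferenceField

open ValuedDifferenceField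

theorem generic_elements_isomorphic
    {E L₁ L₂ Γ₀ : Type*} [Field E] [Field L₁]
    [Field L₂] [LinearOrderedCommGroupWithZero Γ₀]
    (vE : Valuation E Γ₀) (σE : E →+* E) (sΓ : Γ₀ →*₀ Γ₀)
    (hmono : StrictMono sΓ)
    -- the two extensions of E
    (w₁ : Valuation L₁ Γ₀) (τ₁ : L₁ →+* L₁) (f₁ : E →+* L₁)
    (w₂ : Valuation L₂ Γ₀) (τ₂ : L₂ →+* L₂) (f₂ : E →+* L₂)
    (hf₁σ : ∀ x : E, f₁ (σE x) = τ₁ (f₁ x))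
    (hτ₁ : ∀ y : L₁, w₁ (τ₁ y) = sΓ (w₁ y))
    (hf₂σ : ∀ x : E, f₂ (σE x) = τ₂ (f₂ x))
    (hτ₂ : ∀ y : L₂, w₂ (τ₂ y) = sΓ (w₂ y))
    -- a and b, generic over E, in the inversive cores, of value γ
    (a : L₁) (b : L₂) (γ : Γ₀) (hγ : γ ≠ 0)
    (hva : w₁ a = γ) (hvb : w₂ b = γ)
    (hcore_a : ∀ n : ℕ, ∃ y : L₁, (τ₁ : L₁ → L₁)^[n] y = a)
    (hcore_b : ∀ n : ℕ, ∃ y : L₂, (τ₂ : L₂ → L₂)^[n] y = b)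
    (hgen_a : GenericOver vE w₁ τ₁ f₁ a)
    (hgen_b : GenericOver vE w₂ τ₂ f₂ b)
    -- E⟨a⟩ and E⟨b⟩
    (Ea : Subfield L₁)
    (hEa : Ea = Subfield.closure {x : L₁ | x ∈ Set.range f₁ ∨
      (∃ n : ℕ, (τ₁ : L₁ → L₁)^[n] x = a) ∨ (∃ n : ℕ, x = (τ₁ : L₁ → L₁)^[n] a)})
    (Eb : Subfield L₂)
    (hEb : Eb = Subfield.closure {x : L₂ | x ∈ Set.range f₂ ∨
      (∃ n : ℕ, (τ₂ : L₂ → L₂)^[n] x = b) ∨ (∃ n : ℕ, x = (τ₂ : L₂ → L₂)^[n] b)}) :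
    -- (1) the common value of v(p(a)) and v(p(b))
    (∀ (n : ℕ) (P : MvPolynomial (Fin (n + 1)) E),
       w₁ (diffEval τ₁ (MvPolynomial.map f₁ P) a) =
         (P.support.sup fun m => vE (P.coeff m) * idxVal sΓ m γ) ∧
       w₂ (diffEval τ₂ (MvPolynomial.map f₂ P) b) =
         (P.support.sup fun m => vE (P.coeff m) * idxVal sΓ m γ)) ∧
    -- (2) a ↦ b induces a valued difference field isomorphism E⟨a⟩ → E⟨b⟩ over E
    (∃ g : Ea ≃+* Eb,
      (∀ x : E, (g ⟨f₁ x, by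
          rw [hEa]; exact Subfield.subset_closure (Or.inl ⟨x, rfl⟩)⟩ : L₂) = f₂ x) ∧
      ((g ⟨a, by
          rw [hEa]; exact Subfield.subset_closure (Or.inr (Or.inl ⟨0, rfl⟩))⟩ : L₂) = b) ∧
      (∀ z : Ea, w₂ (g z : L₂) = w₁ (z : L₁)) ∧
      (∀ z : Ea, ∀ hz : τ₁ (z : L₁) ∈ Ea,
        ((g ⟨τ₁ (z : L₁), hz⟩ : L₂)) = τ₂ (g z : L₂))) := by
  let F := FractionRing (MvPolynomial ℤ E)
  have h₁ := evalInt_injective hcore_a hmono.injective hγ hτ₁ hf₁σ hva hgen_a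
  have h₂ := evalInt_injective hcore_b hmono.injective hγ hτ₂ hf₂σ hvb hgen_b
  have hval (r : MvPolynomial ℤ E) :
      w₂ (evalInt τ₂ hcore_b f₂ r) = w₁ (evalInt τ₁ hcore_a f₁ r) := by
    obtain ⟨m, n, P, rfl⟩ := exists_eq_rename_sub r
    exact hmono.injective.iterate m
      ((iterate_valuation_evalInt_rename hcore_b hτ₂ hf₂σ hvb hgen_b m n P).trans
        (iterate_valuation_evalInt_rename hcore_a hτ₁ hf₁σ hva hgen_a m n P).symm)
  have hEa' := hEa.trans (closure_eq_fieldRange_lift τ₁ hcore_a f₁ F h₁)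
  obtain ⟨g, hg⟩ := exists_ringEquiv_lift F h₁ h₂ hEa'
    (hEb.trans (closure_eq_fieldRange_lift τ₂ hcore_b f₂ F h₂))
  have hsurj (z : Ea) : ∃ u : F, (z : L₁) = IsFractionRing.lift h₁ u := by
    have hz : (z : L₁) ∈ (IsFractionRing.lift h₁ : F →+* L₁).fieldRange := hEa' ▸ z.2
    obtain ⟨u, hu⟩ := RingHom.mem_fieldRange.1 hz
    exact ⟨u, hu.symm⟩
  refine ⟨fun n P => ⟨GenericOver.valuation_diffEval hgen_a hτ₁ hva P,
    GenericOver.valuation_diffEval hgen_b hτ₂ hvb P⟩, g, fun x => ?_, ?_, fun z => ?_, fun z hz => ?_⟩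
  · exact (hg _ (algebraMap (MvPolynomial ℤ E) F (MvPolynomial.C x)) (by simp)).trans (by simp)
  · exact (hg _ (algebraMap (MvPolynomial ℤ E) F (MvPolynomial.X 0)) (by simp)).trans (by simp)
  · obtain ⟨u, hu⟩ := hsurj z
    rw [hg z u hu, hu, valuation_lift_eq F h₁ h₂ hval]
  · obtain ⟨u, hu⟩ := hsurj z
    obtain ⟨u', hu₁, hu₂⟩ := exists_map_lift_eq_lift F h₁ h₂ (diffShift σE)
      (map_evalInt τ₁ hcore_a f₁ hf₁σ) (map_evalInt τ₂ hcore_b f₂ hf₂σ) u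
    rw [hg _ u' (by rw [← hu₁, ← hu]), hg z u hu, hu₂]
end

section
/- Let K be a weakly σ-henselian valued difference field of residue characteristic zero satisfying FE, let A ⊆ K be a valued difference subfield, and let b ∈ K be generic over A (regular for every difference polynomial over A). If b' ∈ K satisfies rv(b') = rv(b), then b' is also generic over A. -/
/-!
Basic notions for valued difference fields (K,v,σ), following the paper.

A difference polynomial p(X) = P(X, σ(X), …, σ^n(X)) is represented by a
multivariate polynomial `P : MvPolynomial (Fin (n+1)) K`; its evaluation at
`a` substitutes `σ^i(a)` for the i-th variable.  `diffDeriv J P` is the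
Taylor coefficient p_J = (1/J!)·∂^J P (characteristic zero).  We use
Mathlib's multiplicative convention for valuations, so the additive
condition "v x > v y" of the paper becomes "v x < v y", and the additive
pairing I(γ) = Σ iₖ σ_Γ^k(γ) becomes the product `idxVal`.
-/

open scoped Classical

/-- `b` is generic over the subfield `A` of `K`: it is regular for every
difference polynomial with coefficients in `A`, i.e.
v(p(b)) = min_I (v(a_I) + v(b^I)) (multiplicatively, max over support). -/
def GenericOverSet {K Γ₀ : Type*} [Field K] [LinearOrderedCommGroupWithZero Γ₀]
    (v : Valuation K Γ₀) (σ : K →+* K) (A : Set K) (b : K) : Prop :=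
  ∀ (n : ℕ) (P : MvPolynomial (Fin (n + 1)) K), (∀ m, P.coeff m ∈ A) →
    v (diffEval σ P b) =
      P.support.sup fun m =>
        v (P.coeff m) * v (∏ i : Fin (n + 1), ((σ : K → K)^[(i : ℕ)] b) ^ m i)

/-- `rv b = rv b'`: they differ by a factor in `1 + m_K`. -/
def RvEq {K Γ₀ : Type*} [Field K] [LinearOrderedCommGroupWithZero Γ₀]
    (v : Valuation K Γ₀) (a b : K) : Prop :=
  ∃ u : K, v (u - 1) < 1 ∧ b = a * u

/-!
Write `b' = b u` with `v (u - 1) < 1`. Since `σ` respects the valuation and `σ_Γ` is strictly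
monotone, every `σ^i(u)` lies in `1 + 𝔪`, so each monomial of a difference polynomial at `b'`
is the monomial at `b` times a factor in `1 + 𝔪`. Hence the term valuations at `b'` and at `b`
agree, and the difference `p(b') - p(b)` has valuation strictly below their maximum `M`. If
`v (p(b)) = M`, then `v (p(b')) = M` as well.
-/

namespace Valuation

variable {K Γ₀ : Type*} [Field K] [LinearOrderedCommGroupWithZero Γ₀] (v : Valuation K Γ₀)

def oneAddMaxIdeal : Submonoid K where
  carrier := {x | v (x - 1) < 1}
  one_mem' := by simp
  mul_mem' {x y} hx hy := by
    have hx1 : v x = 1 := by simpa using v.map_one_add_of_lt hx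
    calc v (x * y - 1) = v (x * (y - 1) + (x - 1)) := by ring_nf
      _ ≤ max (v x * v (y - 1)) (v (x - 1)) := (v.map_add _ _).trans_eq (by rw [v.map_mul])
      _ < 1 := max_lt (by rwa [hx1, one_mul]) hx

variable {v}

theorem map_eq_one_of_mem_oneAddMaxIdeal {x : K} (hx : x ∈ v.oneAddMaxIdeal) : v x = 1 := by
  simpa using v.map_one_add_of_lt hx

theorem iterate_mem_oneAddMaxIdeal {σ : K →+* K} {sΓ : Γ₀ →*₀ Γ₀} (hmono : StrictMono sΓ)
    (hcomp : ∀ x : K, v (σ x) = sΓ (v x)) {u : K} (hu : u ∈ v.oneAddMaxIdeal) (i : ℕ) :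
    (σ : K → K)^[i] u ∈ v.oneAddMaxIdeal := by
  refine Set.MapsTo.iterate (fun x (hx : v (x - 1) < 1) => ?_) i hu
  show v (σ x - 1) < 1
  rw [← map_one σ, ← RingHom.map_sub, hcomp, ← map_one sΓ]
  exact hmono hx

theorem map_sum_eq_sup_of_mul_mem_oneAddMaxIdeal {ι : Type*} {s : Finset ι} {f w : ι → K}
    (hw : ∀ i ∈ s, w i ∈ v.oneAddMaxIdeal)
    (hf : v (∑ i ∈ s, f i) = s.sup fun i => v (f i)) :
    v (∑ i ∈ s, f i * w i) = s.sup fun i => v (f i * w i) := by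
  have hsup : (s.sup fun i => v (f i * w i)) = s.sup fun i => v (f i) :=
    Finset.sup_congr rfl fun i hi => by
      rw [v.map_mul, map_eq_one_of_mem_oneAddMaxIdeal (hw i hi), mul_one]
  rw [hsup]
  set M := s.sup fun i => v (f i)
  by_cases hM : M = 0
  · rw [hM, ← le_zero_iff, ← hM, ← hsup]
    exact v.map_sum_le fun i hi => Finset.le_sup (f := fun i => v (f i * w i)) hi
  have hdiff : v (∑ i ∈ s, f i * w i - ∑ i ∈ s, f i) < M := by
    rw [← Finset.sum_sub_distrib]
    refine v.map_sum_lt hM fun i hi => ?_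
    calc v (f i * w i - f i) = v (f i) * v (w i - 1) := by rw [← v.map_mul, mul_sub_one]
      _ ≤ M * v (w i - 1) := by
        gcongr; exact Finset.le_sup (f := fun i => v (f i)) hi
      _ < M := mul_lt_of_lt_one_right (zero_lt_iff.mpr hM) (hw i hi)
  rw [← hf] at hdiff ⊢
  exact v.map_eq_of_sub_lt hdiff

end Valuation

open Valuation

theorem diffEval_eq_sum {K : Type*} [Field K] (σ : K →+* K) {n : ℕ}
    (P : MvPolynomial (Fin (n + 1)) K) (a : K) :
    diffEval σ P a =
      ∑ m ∈ P.support, P.coeff m * ∏ i : Fin (n + 1), ((σ : K → K)^[(i : ℕ)] a) ^ m i :=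
  MvPolynomial.eval_eq' _ _

theorem prod_iterate_pow_mul {K : Type*} [Field K] (σ : K →+* K) {n : ℕ}
    (m : Fin (n + 1) →₀ ℕ) (a u : K) :
    ∏ i : Fin (n + 1), ((σ : K → K)^[(i : ℕ)] (a * u)) ^ m i =
      (∏ i : Fin (n + 1), ((σ : K → K)^[(i : ℕ)] a) ^ m i) *
        ∏ i : Fin (n + 1), ((σ : K → K)^[(i : ℕ)] u) ^ m i := by
  rw [← Finset.prod_mul_distrib]
  simp only [iterate_map_mul, mul_pow]

theorem generic_depends_only_on_rv_general
    {K Γ₀ : Type*} [Field K] [LinearOrderedCommGroupWithZero Γ₀]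
    (v : Valuation K Γ₀) (σ : K →+* K) (sΓ : Γ₀ →*₀ Γ₀)
    (hmono : StrictMono sΓ) (hcomp : ∀ x : K, v (σ x) = sΓ (v x))
    (A : Subfield K)
    (b b' : K)
    (hgen : GenericOverSet v σ (A : Set K) b)
    (hrv : RvEq v b b') :
    GenericOverSet v σ (A : Set K) b' := by
  obtain ⟨u, hu, rfl⟩ := hrv
  intro n P hP
  have hfactor : ∀ m : Fin (n + 1) →₀ ℕ,
      ∏ i : Fin (n + 1), ((σ : K → K)^[(i : ℕ)] u) ^ m i ∈ v.oneAddMaxIdeal :=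
    fun m => Submonoid.prod_mem _ fun i _ =>
      Submonoid.pow_mem _ (iterate_mem_oneAddMaxIdeal hmono hcomp hu i) _
  have hb := hgen n P hP
  simp only [diffEval_eq_sum, ← v.map_mul] at hb ⊢
  simp only [prod_iterate_pow_mul, ← mul_assoc]
  exact map_sum_eq_sup_of_mul_mem_oneAddMaxIdeal (fun m _ => hfactor m) hb

theorem generic_depends_only_on_rv
    {K Γ₀ : Type*} [Field K] [CharZero K] [LinearOrderedCommGroupWithZero Γ₀]
    (v : Valuation K Γ₀) (σ : K →+* K) (sΓ : Γ₀ →*₀ Γ₀)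
    (hmono : StrictMono sΓ) (hcomp : ∀ x : K, v (σ x) = sΓ (v x))
    (hres0 : ResidueCharZero v)
    (hweak : WeaklySigmaHenselian v σ sΓ)
    -- FE
    (hFE : ∀ x : K, IsAlgebraic σ.fieldRange x → x ∈ σ.fieldRange)
    -- A is a valued difference subfield of K
    (A : Subfield K) (hσA : ∀ x ∈ A, σ x ∈ A)
    (b b' : K)
    (hgen : GenericOverSet v σ (A : Set K) b)
    (hrv : RvEq v b b') :
    GenericOverSet v σ (A : Set K) b' :=
  generic_depends_only_on_rv_general v σ sΓ hmono hcomp A b b' hgen hrv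
end
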